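/- arXiv:1702.06495 — 4 statements merged into one kernel-verified Lean document; each statement's English description precedes it below -/
import Mathlib

section
/- Let C : [0,T] ⇉ ℝ^e be a multifunction with nonempty compact convex values, continuous for the Hausdorff distance, containing a fixed ball (uniform interiority condition). Let y : [0,T] → ℝ^e be continuous of bounded variation with y(t) ∈ C(t) for all t, and suppose that for every s ≤ t and every z ∈ ⋂_{τ ∈ [s,t]} C(τ), ⟨z, y(t) - y(s)⟩ ≥ (‖y(t)‖² - ‖y(s)‖²)/2. Then y solves the sweeping process: -dDy/d|Dy|(t) ∈ N_{C(t)}(y(t)) for |Dy|-almost every t. -/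
open scoped BigOperators

noncomputable section

/-- `π` is a dissection of the interval `[s,t]`. -/
def IsDissection (s t : ℝ) (π : List ℝ) : Prop :=
  List.Chain' (· < ·) π ∧ π.head? = some s ∧ π.getLast? = some t

/-- The sum `∑ ‖x(t_{k+1}) - x(t_k)‖^p` along a dissection. -/
def varSum (p : ℝ) {E : Type*} [NormedAddCommGroup E] (x : ℝ → E) (π : List ℝ) : ℝ :=
  ((π.zip π.tail).map (fun q => ‖x q.2 - x q.1‖ ^ p)).sum

/-- The `p`-variation seminorm of `x` on `[s,t]`. -/
def pVar (p : ℝ) {E : Type*} [NormedAddCommGroup E] (x : ℝ → E) (s t : ℝ) : ℝ :=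
  sSup {v | ∃ π, IsDissection s t π ∧ v = varSum p x π ^ (1 / p)}

/-- `x` has finite `p`-variation on `[s,t]`. -/
def HasFiniteVar (p : ℝ) {E : Type*} [NormedAddCommGroup E] (x : ℝ → E) (s t : ℝ) : Prop :=
  BddAbove {v | ∃ π, IsDissection s t π ∧ v = varSum p x π ^ (1 / p)}


open MeasureTheory

/-- The normal cone of a convex set `C` at `x` (empty when `x ∉ C`). -/
def normalCone {e : ℕ} (C : Set (EuclideanSpace ℝ (Fin e)))
    (x : EuclideanSpace ℝ (Fin e)) : Set (EuclideanSpace ℝ (Fin e)) :=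
  {u | x ∈ C ∧ ∀ z ∈ C, (inner ℝ u (z - x) : ℝ) ≤ 0}


/-!
Fix `t`, `z ∈ C(t)` and `θ ∈ (0,1]`. Since `C` contains the ball `B(x₀, r)` and moves continuously
for the Hausdorff distance, the point `w = (1-θ) z + θ x₀` lies in `C(τ)` for all `τ` near `t`.
On a small interval `[a,c] ∋ t` the variational inequality then reads
`⟪w - (y(a) + y(c))/2, y(c) - y(a)⟫ ≥ 0`. Dividing by `|Dy|([a,c])` and letting the interval
shrink, Lebesgue's differentiation theorem turns `(y(c) - y(a)) / |Dy|([a,c])` into `dDy/d|Dy|(t)`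
for `|Dy|`-a.e. `t`, while continuity of `y` turns the midpoint into `y(t)`; letting `θ → 0` gives
`⟪z - y(t), dDy/d|Dy|(t)⟫ ≥ 0`.
-/

open MeasureTheory Metric Filter Topology Set Bornology
open scoped InnerProductSpace

lemma IsDissection.mem_Icc {s t : ℝ} {π : List ℝ} (h : IsDissection s t π) {u : ℝ}
    (hu : u ∈ π) : u ∈ Icc s t := by
  obtain ⟨hchain, hs, ht⟩ := h
  have hπ := List.isChain_iff_pairwise.1 hchain
  constructor
  · obtain ⟨l, rfl⟩ := List.head?_eq_some_iff.1 hs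
    rcases List.mem_cons.1 hu with rfl | hu
    · rfl
    · exact ((List.pairwise_cons.1 hπ).1 u hu).le
  · obtain ⟨l, rfl⟩ := List.getLast?_eq_some_iff.1 ht
    rcases List.mem_append.1 hu with hu | hu
    · exact ((List.pairwise_append.1 hπ).2.2 u hu t (List.mem_singleton_self t)).le
    · exact (List.mem_singleton.1 hu).le

lemma pVar_eq_zero_of_eqOn_const {E : Type*} [NormedAddCommGroup E] {p : ℝ} (hp : p ≠ 0)
    {x : ℝ → E} {s t : ℝ} {c : E} (hx : ∀ u ∈ Icc s t, x u = c) : pVar p x s t = 0 := by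
  have hzero : ∀ v ∈ {v | ∃ π, IsDissection s t π ∧ v = varSum p x π ^ (1 / p)}, v = 0 := by
    rintro v ⟨π, hπ, rfl⟩
    have hsum : varSum p x π = 0 := by
      refine List.sum_eq_zero fun a ha => ?_
      obtain ⟨q, hq, rfl⟩ := List.mem_map.1 ha
      rw [hx q.2 (hπ.mem_Icc (List.mem_of_mem_tail (List.of_mem_zip hq).2)),
        hx q.1 (hπ.mem_Icc (List.of_mem_zip hq).1), sub_self, norm_zero, Real.zero_rpow hp]
    rw [hsum, Real.zero_rpow (one_div_ne_zero hp)]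
  exact le_antisymm (Real.sSup_nonpos fun v hv => (hzero v hv).le)
    (Real.sSup_nonneg fun v hv => (hzero v hv).ge)

lemma real_inner_midpoint_sub {F : Type*} [NormedAddCommGroup F] [InnerProductSpace ℝ F]
    (u v : F) : ⟪(2 : ℝ)⁻¹ • (u + v), v - u⟫_ℝ = (‖v‖ ^ 2 - ‖u‖ ^ 2) / 2 := by
  rw [real_inner_smul_left, inner_add_left, inner_sub_right, inner_sub_right,
    real_inner_self_eq_norm_sq, real_inner_self_eq_norm_sq, real_inner_comm u v]
  ring

lemma combo_mem_of_hausdorffDist_lt {F : Type*} [NormedAddCommGroup F] [NormedSpace ℝ F]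
    {C₁ C₂ : Set F} {x₀ z : F} {r θ : ℝ} (hC₁ : IsBounded C₁) (hC₂ : IsBounded C₂)
    (hconv : Convex ℝ C₂) (hball : closedBall x₀ r ⊆ C₂) (hr : 0 ≤ r) (hz : z ∈ C₁)
    (hθ₀ : 0 < θ) (hθ₁ : θ ≤ 1) (hd : hausdorffDist C₁ C₂ < θ * r) :
    (1 - θ) • z + θ • x₀ ∈ C₂ := by
  have hx₀ : x₀ ∈ C₂ := hball (mem_closedBall_self hr)
  have hfin := hausdorffEDist_ne_top_of_nonempty_of_bounded ⟨z, hz⟩ ⟨x₀, hx₀⟩ hC₁ hC₂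
  obtain ⟨z', hz', hzz'⟩ :=
    (infDist_lt_iff ⟨x₀, hx₀⟩).1 ((infDist_le_hausdorffDist_of_mem hz hfin).trans_lt hd)
  set w := x₀ + ((1 - θ) / θ) • (z - z')
  have hw : w ∈ C₂ := by
    refine hball ?_
    rw [mem_closedBall, dist_eq_norm, add_sub_cancel_left, norm_smul,
      Real.norm_of_nonneg (div_nonneg (sub_nonneg.2 hθ₁) hθ₀.le)]
    rw [dist_eq_norm] at hzz'
    calc (1 - θ) / θ * ‖z - z'‖ ≤ (1 - θ) / θ * (θ * r) := by gcongr
      _ = (1 - θ) * r := by field_simp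
      _ ≤ r := by nlinarith
  convert hconv hz' hw (sub_nonneg.2 hθ₁) hθ₀.le (by ring) using 1
  rw [smul_add, smul_smul, mul_div_cancel₀ _ hθ₀.ne']
  module

lemma ae_tendsto_setAverage_closedBall {α F : Type*} [MetricSpace α] [MeasurableSpace α]
    [BorelSpace α] [SecondCountableTopology α] [HasBesicovitchCovering α]
    [NormedAddCommGroup F] [NormedSpace ℝ F] [CompleteSpace F]
    {μ : Measure α} [IsLocallyFiniteMeasure μ] {f : α → F} (hf : LocallyIntegrable f μ) :
    ∀ᵐ x ∂μ, Tendsto (fun r => ⨍ u in closedBall x r, f u ∂μ) (𝓝[>] 0) (𝓝 (f x)) := by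
  filter_upwards [(Besicovitch.vitaliFamily μ).ae_tendsto_average hf] with x hx
  exact hx.comp (Besicovitch.tendsto_filterAt μ x)

section SweepingProcess

variable {E : Type*} [NormedAddCommGroup E] [InnerProductSpace ℝ E]
  {T : ℝ} {C : ℝ → Set E} {y : ℝ → E} {ν : Measure ℝ} {g : ℝ → E}

lemma inner_sub_nonneg_of_eventually_mem
    (hineq : ∀ s t : ℝ, 0 ≤ s → s ≤ t → t ≤ T →
      ∀ z, (∀ τ ∈ Icc s t, z ∈ C τ) → (‖y t‖ ^ 2 - ‖y s‖ ^ 2) / 2 ≤ ⟪z, y t - y s⟫_ℝ)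
    (hg : ∀ s t : ℝ, 0 ≤ s → s ≤ t → t ≤ T → y t - y s = ∫ u in Icc s t, g u ∂ν)
    {b t : ℝ} (hbT : b ≤ T) (ht : t ∈ Icc 0 b) (hy : ContinuousWithinAt y (Icc 0 T) t)
    (havg : Tendsto (fun h => ⨍ u in closedBall t h, g u ∂ν.restrict (Icc 0 b)) (𝓝[>] 0)
      (𝓝 (g t)))
    {w : E} (hw : ∀ᶠ τ in 𝓝 t, τ ∈ Icc 0 T → w ∈ C τ) :
    0 ≤ ⟪w - y t, g t⟫_ℝ := by
  set a : ℝ → ℝ := fun h => max (t - h) 0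
  set c : ℝ → ℝ := fun h => min (t + h) b
  have ha₀ : ∀ h, 0 ≤ a h := fun h => le_max_right _ _
  have ha_ge : ∀ h, t - h ≤ a h := fun h => le_max_left _ _
  have hc_le : ∀ h, c h ≤ t + h := fun h => min_le_left _ _
  have hcT : ∀ h, c h ≤ T := fun h => (min_le_right _ _).trans hbT
  have hac : ∀ h, 0 ≤ h → a h ≤ c h := fun h hh =>
    max_le (le_min (by linarith) (by linarith [ht.2]))
      (le_min (by linarith [ht.1]) (ht.1.trans ht.2))
  have ha : Tendsto a (𝓝[>] 0) (𝓝[Icc 0 T] t) := by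
    refine tendsto_nhdsWithin_iff.2 ⟨?_, ?_⟩
    · exact ((by fun_prop : Continuous a).tendsto' 0 t (by simp [a, ht.1])).mono_left
        nhdsWithin_le_nhds
    · filter_upwards [self_mem_nhdsWithin] with h (hh : 0 < h)
      exact ⟨ha₀ h, (hac h hh.le).trans (hcT h)⟩
  have hc : Tendsto c (𝓝[>] 0) (𝓝[Icc 0 T] t) := by
    refine tendsto_nhdsWithin_iff.2 ⟨?_, ?_⟩
    · exact ((by fun_prop : Continuous c).tendsto' 0 t (by simp [c, ht.2])).mono_left
        nhdsWithin_le_nhds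
    · filter_upwards [self_mem_nhdsWithin] with h (hh : 0 < h)
      exact ⟨(ha₀ h).trans (hac h hh.le), hcT h⟩
  have hmid : Tendsto (fun h => w - (2 : ℝ)⁻¹ • (y (a h) + y (c h))) (𝓝[>] 0)
      (𝓝 (w - y t)) := by
    have hyt : (2 : ℝ)⁻¹ • (y t + y t) = y t := by module
    have := (((hy.tendsto.comp ha).add (hy.tendsto.comp hc)).const_smul (2 : ℝ)⁻¹).const_sub w
    rwa [hyt] at this
  refine ge_of_tendsto (hmid.inner havg) ?_
  obtain ⟨δ, hδ, hδw⟩ := Metric.eventually_nhds_iff.1 hw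
  filter_upwards [Ioo_mem_nhdsGT hδ] with h hh
  have hball : closedBall t h ∩ Icc 0 b = Icc (a h) (c h) := by
    rw [Real.closedBall_eq_Icc, Icc_inter_Icc]
  have hmem : ∀ τ ∈ Icc (a h) (c h), w ∈ C τ := by
    intro τ hτ
    refine hδw ?_ ⟨(ha₀ h).trans hτ.1, hτ.2.trans (hcT h)⟩
    rw [Real.dist_eq, abs_sub_lt_iff]
    constructor <;> linarith [hτ.1, hτ.2, ha_ge h, hc_le h, hh.2]
  have key := hineq (a h) (c h) (ha₀ h) (hac h hh.1.le) (hcT h) w hmem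
  rw [← real_inner_midpoint_sub, hg _ _ (ha₀ h) (hac h hh.1.le) (hcT h), ← sub_nonneg,
    ← inner_sub_left] at key
  rw [setAverage_eq, Measure.restrict_restrict measurableSet_closedBall, hball,
    real_inner_smul_right]
  -- `(ν.real _)⁻¹ ≥ 0` also when the ball is null, so no positivity of `ν` is needed.
  exact mul_nonneg (by positivity) key

lemma eventually_combo_mem
    (hbdd : ∀ t ∈ Icc 0 T, IsBounded (C t)) (hconv : ∀ t ∈ Icc 0 T, Convex ℝ (C t))
    (hcont : ∀ t ∈ Icc (0 : ℝ) T, ∀ ε > (0 : ℝ), ∃ δ > (0 : ℝ),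
      ∀ s ∈ Icc (0 : ℝ) T, |s - t| < δ → hausdorffDist (C s) (C t) < ε)
    {x₀ : E} {r : ℝ} (hr : 0 < r) (hball : ∀ t ∈ Icc 0 T, closedBall x₀ r ⊆ C t)
    {t : ℝ} (ht : t ∈ Icc 0 T) {z : E} (hz : z ∈ C t) {θ : ℝ} (hθ₀ : 0 < θ) (hθ₁ : θ ≤ 1) :
    ∀ᶠ τ in 𝓝 t, τ ∈ Icc 0 T → (1 - θ) • z + θ • x₀ ∈ C τ := by
  obtain ⟨δ, hδ, hδC⟩ := hcont t ht (θ * r) (by positivity)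
  filter_upwards [Metric.ball_mem_nhds t hδ] with τ hτ hτT
  refine combo_mem_of_hausdorffDist_lt (hbdd t ht) (hbdd τ hτT) (hconv τ hτT) (hball τ hτT)
    hr.le hz hθ₀ hθ₁ ?_
  rw [hausdorffDist_comm]
  exact hδC τ hτT (by rwa [mem_ball, Real.dist_eq] at hτ)

lemma inner_sub_nonneg_of_mem
    (hbdd : ∀ t ∈ Icc 0 T, IsBounded (C t)) (hconv : ∀ t ∈ Icc 0 T, Convex ℝ (C t))
    (hcont : ∀ t ∈ Icc (0 : ℝ) T, ∀ ε > (0 : ℝ), ∃ δ > (0 : ℝ),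
      ∀ s ∈ Icc (0 : ℝ) T, |s - t| < δ → hausdorffDist (C s) (C t) < ε)
    {x₀ : E} {r : ℝ} (hr : 0 < r) (hball : ∀ t ∈ Icc 0 T, closedBall x₀ r ⊆ C t)
    (hineq : ∀ s t : ℝ, 0 ≤ s → s ≤ t → t ≤ T →
      ∀ z, (∀ τ ∈ Icc s t, z ∈ C τ) → (‖y t‖ ^ 2 - ‖y s‖ ^ 2) / 2 ≤ ⟪z, y t - y s⟫_ℝ)
    (hg : ∀ s t : ℝ, 0 ≤ s → s ≤ t → t ≤ T → y t - y s = ∫ u in Icc s t, g u ∂ν)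
    {b t : ℝ} (hbT : b ≤ T) (ht : t ∈ Icc 0 b) (hy : ContinuousWithinAt y (Icc 0 T) t)
    (havg : Tendsto (fun h => ⨍ u in closedBall t h, g u ∂ν.restrict (Icc 0 b)) (𝓝[>] 0)
      (𝓝 (g t)))
    {z : E} (hz : z ∈ C t) :
    0 ≤ ⟪z - y t, g t⟫_ℝ := by
  have htT : t ∈ Icc 0 T := ⟨ht.1, ht.2.trans hbT⟩
  have hlim : Tendsto (fun θ : ℝ => ⟪(1 - θ) • z + θ • x₀ - y t, g t⟫_ℝ) (𝓝[>] 0)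
      (𝓝 ⟪z - y t, g t⟫_ℝ) :=
    ((by fun_prop : Continuous fun θ : ℝ => ⟪(1 - θ) • z + θ • x₀ - y t, g t⟫_ℝ).tendsto' 0 _
      (by simp)).mono_left nhdsWithin_le_nhds
  refine ge_of_tendsto hlim ?_
  filter_upwards [Ioc_mem_nhdsGT one_pos] with θ hθ
  exact inner_sub_nonneg_of_eventually_mem hineq hg hbT ht hy havg
    (eventually_combo_mem hbdd hconv hcont hr hball htT hz hθ.1 hθ.2)

/-- For `s > t₀` the integral in `hg` is the junk value `0`, so `y` is constant on `Icc t₀ T`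
and has no variation there. -/
lemma measure_Icc_eq_zero_of_not_integrableOn [IsLocallyFiniteMeasure ν]
    (hy : ContinuousOn y (Icc 0 T))
    (hν : ∀ s t : ℝ, 0 ≤ s → s ≤ t → t ≤ T → (ν (Icc s t)).toReal = pVar 1 y s t)
    (hg : ∀ s t : ℝ, 0 ≤ s → s ≤ t → t ≤ T → y t - y s = ∫ u in Icc s t, g u ∂ν)
    {t₀ : ℝ} (ht₀ : 0 ≤ t₀) (ht₀T : t₀ ≤ T)
    (hnot : ∀ s ∈ Ioc t₀ T, ¬ IntegrableOn g (Icc 0 s) ν) :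
    ν (Icc t₀ T) = 0 := by
  have hconst : EqOn y (fun _ => y 0) (Ioc t₀ T) := fun s hs => by
    have := hg 0 s le_rfl (ht₀.trans hs.1.le) hs.2
    rwa [integral_undef (hnot s hs), sub_eq_zero] at this
  obtain ⟨c, hc⟩ : ∃ c, ∀ u ∈ Icc t₀ T, y u = c := by
    rcases ht₀T.eq_or_lt with rfl | hlt
    · exact ⟨y t₀, fun u hu => by rw [Icc_self, mem_singleton_iff] at hu; rw [hu]⟩
    · exact ⟨y 0, hconst.of_subset_closure (hy.mono (Icc_subset_Icc_left ht₀))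
        continuousOn_const Ioc_subset_Icc_self (closure_Ioc hlt.ne).ge⟩
  have h := hν t₀ T ht₀ ht₀T le_rfl
  rw [pVar_eq_zero_of_eqOn_const one_ne_zero hc, ENNReal.toReal_eq_zero_iff] at h
  exact h.resolve_right measure_Icc_lt_top.ne

end SweepingProcess

lemma ae_mem_normalCone_of_integrableOn {e : ℕ} {T : ℝ} {C : ℝ → Set (EuclideanSpace ℝ (Fin e))}
    {y g : ℝ → EuclideanSpace ℝ (Fin e)} {ν : Measure ℝ} [IsLocallyFiniteMeasure ν]
    (hbdd : ∀ t ∈ Icc 0 T, IsBounded (C t)) (hconv : ∀ t ∈ Icc 0 T, Convex ℝ (C t))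
    (hcont : ∀ t ∈ Icc (0 : ℝ) T, ∀ ε > (0 : ℝ), ∃ δ > (0 : ℝ),
      ∀ s ∈ Icc (0 : ℝ) T, |s - t| < δ → hausdorffDist (C s) (C t) < ε)
    {x₀ : EuclideanSpace ℝ (Fin e)} {r : ℝ} (hr : 0 < r)
    (hball : ∀ t ∈ Icc 0 T, closedBall x₀ r ⊆ C t)
    (hy : ContinuousOn y (Icc 0 T)) (hmem : ∀ t ∈ Icc 0 T, y t ∈ C t)
    (hineq : ∀ s t : ℝ, 0 ≤ s → s ≤ t → t ≤ T →
      ∀ z, (∀ τ ∈ Icc s t, z ∈ C τ) → (‖y t‖ ^ 2 - ‖y s‖ ^ 2) / 2 ≤ ⟪z, y t - y s⟫_ℝ)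
    (hg : ∀ s t : ℝ, 0 ≤ s → s ≤ t → t ≤ T → y t - y s = ∫ u in Icc s t, g u ∂ν)
    {b : ℝ} (hb : b ∈ Icc 0 T) (hint : IntegrableOn g (Icc 0 b) ν) :
    ∀ᵐ t ∂ν, t ∈ Icc 0 b → -g t ∈ normalCone (C t) (y t) := by
  rw [← ae_restrict_iff' measurableSet_Icc]
  filter_upwards [ae_tendsto_setAverage_closedBall hint.locallyIntegrable,
    ae_restrict_mem measurableSet_Icc] with t havg ht
  have htT : t ∈ Icc 0 T := ⟨ht.1, ht.2.trans hb.2⟩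
  refine ⟨hmem t htT, fun z hz => ?_⟩
  have := inner_sub_nonneg_of_mem hbdd hconv hcont hr hball hineq hg hb.2 ht (hy t htT) havg hz
  rw [inner_neg_left, real_inner_comm]
  linarith

theorem solves_sweeping_process_of_variational_inequality_general
    (e : ℕ) (T : ℝ) (hT : 0 < T)
    (C : ℝ → Set (EuclideanSpace ℝ (Fin e)))
    (hC : ∀ t ∈ Set.Icc (0 : ℝ) T,
      (C t).Nonempty ∧ IsCompact (C t) ∧ Convex ℝ (C t))
    (hcont : ∀ t ∈ Set.Icc (0 : ℝ) T, ∀ ε > (0 : ℝ), ∃ δ > (0 : ℝ),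
      ∀ s ∈ Set.Icc (0 : ℝ) T, |s - t| < δ →
        Metric.hausdorffDist (C s) (C t) < ε)
    (x₀ : EuclideanSpace ℝ (Fin e)) (r : ℝ) (hr : 0 < r)
    (hball : ∀ t ∈ Set.Icc (0 : ℝ) T, Metric.closedBall x₀ r ⊆ C t)
    (y : ℝ → EuclideanSpace ℝ (Fin e))
    (hy : ContinuousOn y (Set.Icc 0 T))
    (hmem : ∀ t ∈ Set.Icc (0 : ℝ) T, y t ∈ C t)
    (hineq : ∀ s t : ℝ, 0 ≤ s → s ≤ t → t ≤ T →
      ∀ z, (∀ τ ∈ Set.Icc s t, z ∈ C τ) →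
        (‖y t‖ ^ 2 - ‖y s‖ ^ 2) / 2 ≤ (inner ℝ z (y t - y s) : ℝ))
    -- `ν` is the variation measure `|Dy|` of `y` :
    (ν : Measure ℝ) [IsFiniteMeasure ν]
    (hν : ∀ s t : ℝ, 0 ≤ s → s ≤ t → t ≤ T →
      (ν (Set.Icc s t)).toReal = pVar 1 y s t)
    -- `g` is the Radon–Nikodym density `dDy/d|Dy|` of the differential measure of `y` :
    (g : ℝ → EuclideanSpace ℝ (Fin e))
    (hg : ∀ s t : ℝ, 0 ≤ s → s ≤ t → t ≤ T →
      y t - y s = ∫ u in Set.Icc s t, g u ∂ν) :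
    ∀ᵐ t ∂(ν.restrict (Set.Icc 0 T)), -g t ∈ normalCone (C t) (y t) := by
  have hbdd : ∀ t ∈ Icc 0 T, IsBounded (C t) := fun t ht => (hC t ht).2.1.isBounded
  have hconv : ∀ t ∈ Icc 0 T, Convex ℝ (C t) := fun t ht => (hC t ht).2.2
  set S := {s ∈ Icc 0 T | IntegrableOn g (Icc 0 s) ν}
  have h0S : 0 ∈ S := ⟨⟨le_rfl, hT.le⟩, by rw [Icc_self]; exact integrableOn_singleton⟩
  have hSbdd : BddAbove S := ⟨T, fun s hs => hs.1.2⟩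
  obtain ⟨b, -, hb_lim, hbS⟩ := exists_seq_tendsto_sSup ⟨0, h0S⟩ hSbdd
  have ht₀T : sSup S ≤ T := csSup_le ⟨0, h0S⟩ fun s hs => hs.1.2
  have ht₀ : 0 ≤ sSup S := le_csSup hSbdd h0S
  have htail : ν (Icc (sSup S) T) = 0 :=
    measure_Icc_eq_zero_of_not_integrableOn hy hν hg ht₀ ht₀T fun s hs hint =>
      not_lt_of_ge (le_csSup hSbdd ⟨⟨ht₀.trans hs.1.le, hs.2⟩, hint⟩) hs.1
  have hgood := ae_all_iff.2 fun n => ae_mem_normalCone_of_integrableOn hbdd hconv hcont hr hball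
    hy hmem hineq hg (hbS n).1 (hbS n).2
  rw [ae_restrict_iff' measurableSet_Icc]
  filter_upwards [hgood, measure_eq_zero_iff_ae_notMem.1 htail] with t hgood_t htail_t ht
  have hlt : t < sSup S := lt_of_not_ge fun h => htail_t ⟨h, ht.2⟩
  obtain ⟨n, hn⟩ := (hb_lim.eventually (lt_mem_nhds hlt)).exists
  exact hgood_t n ⟨ht.1, hn.le⟩

theorem solves_sweeping_process_of_variational_inequality
    (e : ℕ) (T : ℝ) (hT : 0 < T)
    (C : ℝ → Set (EuclideanSpace ℝ (Fin e)))
    (hC : ∀ t ∈ Set.Icc (0 : ℝ) T,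
      (C t).Nonempty ∧ IsCompact (C t) ∧ Convex ℝ (C t))
    (hcont : ∀ t ∈ Set.Icc (0 : ℝ) T, ∀ ε > (0 : ℝ), ∃ δ > (0 : ℝ),
      ∀ s ∈ Set.Icc (0 : ℝ) T, |s - t| < δ →
        Metric.hausdorffDist (C s) (C t) < ε)
    (x₀ : EuclideanSpace ℝ (Fin e)) (r : ℝ) (hr : 0 < r)
    (hball : ∀ t ∈ Set.Icc (0 : ℝ) T, Metric.closedBall x₀ r ⊆ C t)
    (y : ℝ → EuclideanSpace ℝ (Fin e))
    (hy : ContinuousOn y (Set.Icc 0 T))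
    (hbv : HasFiniteVar 1 y 0 T)
    (hmem : ∀ t ∈ Set.Icc (0 : ℝ) T, y t ∈ C t)
    (hineq : ∀ s t : ℝ, 0 ≤ s → s ≤ t → t ≤ T →
      ∀ z, (∀ τ ∈ Set.Icc s t, z ∈ C τ) →
        (‖y t‖ ^ 2 - ‖y s‖ ^ 2) / 2 ≤ (inner ℝ z (y t - y s) : ℝ))
    -- `ν` is the variation measure `|Dy|` of `y` :
    (ν : Measure ℝ) [IsFiniteMeasure ν]
    (hν : ∀ s t : ℝ, 0 ≤ s → s ≤ t → t ≤ T →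
      (ν (Set.Icc s t)).toReal = pVar 1 y s t)
    -- `g` is the Radon–Nikodym density `dDy/d|Dy|` of the differential measure of `y` :
    (g : ℝ → EuclideanSpace ℝ (Fin e))
    (hg : ∀ s t : ℝ, 0 ≤ s → s ≤ t → t ≤ T →
      y t - y s = ∫ u in Set.Icc s t, g u ∂ν) :
    ∀ᵐ t ∂(ν.restrict (Set.Icc 0 T)), -g t ∈ normalCone (C t) (y t) :=
  solves_sweeping_process_of_variational_inequality_general e T hT C hC hcont x₀ r hr hball y hy
    hmem hineq ν hν g hg
end
end

section
/- Let e > 1, let C ⊆ ℝ^e be a closed convex set containing the ball B(x, r) with r > 0, let a ∈ ℝ^e, and let the quantity S := ‖a - x‖ satisfy S > r. Then ⟨a - p_C(a), a - x⟩ ≥ r ‖a - p_C(a)‖ + ‖a - p_C(a)‖², and hence ‖a - p_C(a)‖ ≤ (‖a - x‖² - r²)/(2r). -/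
noncomputable section

/-- `y` is the metric projection of `x` onto `C`. -/
def IsMetricProj {e : ℕ} (C : Set (EuclideanSpace ℝ (Fin e)))
    (x y : EuclideanSpace ℝ (Fin e)) : Prop :=
  y ∈ C ∧ ∀ z ∈ C, dist x y ≤ dist x z

theorem valadier_estimate (e : ℕ) (he : 1 < e)
    (C : Set (EuclideanSpace ℝ (Fin e)))
    (hclosed : IsClosed C) (hconv : Convex ℝ C)
    (x : EuclideanSpace ℝ (Fin e)) (r : ℝ) (hr : 0 < r)
    (hball : Metric.closedBall x r ⊆ C)
    (a y : EuclideanSpace ℝ (Fin e))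
    (hS : r < ‖a - x‖)
    (hy : IsMetricProj C a y) :
    r * ‖a - y‖ + ‖a - y‖ ^ 2 ≤ (inner ℝ (a - y) (a - x) : ℝ) ∧
      ‖a - y‖ ≤ (‖a - x‖ ^ 2 - r ^ 2) / (2 * r) := by
  have hS0 : (0:ℝ) < ‖a - x‖ := lt_trans hr hS
  have hproj : ∀ z ∈ C, (inner ℝ (a - y) (z - y) : ℝ) ≤ 0 := by
    have : Nonempty C := ⟨⟨y, hy.1⟩⟩
    have hinf : ‖a - y‖ = ⨅ w : C, ‖a - w‖ := by
      apply le_antisymm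
      · exact le_ciInf fun w => by simpa [dist_eq_norm] using hy.2 w w.2
      · exact ciInf_le ⟨0, by rintro b ⟨w, rfl⟩; exact norm_nonneg _⟩ (⟨y, hy.1⟩ : C)
    exact fun z hz => (norm_eq_iInf_iff_real_inner_le_zero hconv hy.1).mp hinf z hz
  have hfirst : r * ‖a - y‖ + ‖a - y‖ ^ 2 ≤ (inner ℝ (a - y) (a - x) : ℝ) := by
    rcases eq_or_ne a y with h | h
    · simp [h]
    · set d := ‖a - y‖ with hd
      have hd0 : 0 < d := norm_pos_iff.mpr (sub_ne_zero.mpr h)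
      set z := x + (r / d) • (a - y) with hz
      have hzC : z ∈ C := by
        apply hball
        simp only [Metric.mem_closedBall, dist_eq_norm, hz, add_sub_cancel_left,
          norm_smul, Real.norm_eq_abs, abs_of_pos (div_pos hr hd0)]
        rw [div_mul_cancel₀ _ (ne_of_gt hd0)]
      have hle := hproj z hzC
      have hzy : z - y = (x - y) + (r / d) • (a - y) := by
        rw [hz]; abel
      rw [hzy, inner_add_right, real_inner_smul_right, real_inner_self_eq_norm_sq] at hle
      have haxy : (inner ℝ (a - y) (a - x) : ℝ)
          = d ^ 2 - (inner ℝ (a - y) (x - y) : ℝ) := by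
        have : a - x = (a - y) - (x - y) := by abel
        rw [this, inner_sub_right, real_inner_self_eq_norm_sq, ← hd, sq]
      have hcancel : r / d * ‖a - y‖ ^ 2 = r * d := by
        rw [← hd]; field_simp
      rw [hcancel] at hle
      rw [haxy]; nlinarith
  refine ⟨hfirst, ?_⟩
  have hcs : (inner ℝ (a - y) (a - x) : ℝ) ≤ ‖a - y‖ * ‖a - x‖ := real_inner_le_norm _ _
  rcases eq_or_lt_of_le (norm_nonneg (a - y)) with h0 | h0
  · rw [← h0]
    apply div_nonneg _ (by linarith)
    nlinarith
  · have hkey : r + ‖a - y‖ ≤ ‖a - x‖ := by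
      have : ‖a - y‖ * (r + ‖a - y‖) ≤ ‖a - y‖ * ‖a - x‖ := by nlinarith
      exact le_of_mul_le_mul_left this h0
    rw [le_div_iff₀ (by linarith)]
    nlinarith
end
end

section
/- Let q, r ∈ [1,∞) with 1/q + 1/r > 1, let z : [0,T] → ℝ^d be continuous of finite q-variation, let y : [0,T] → M_{e,d}(ℝ) be continuous of finite r-variation, and let (y_n) be continuous functions of finite r-variation with ‖y_n - y‖_∞ → 0 and sup_n ‖y_n‖_{r-var,[0,T]} < ∞. Then the Young integrals satisfy sup_{t ∈ [0,T]} ‖∫_0^t y_n dz - ∫_0^t y dz‖ → 0. -/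
open scoped BigOperators

noncomputable section

open Filter

/-- The Riemann sum of `y` against `z` along a dissection `π`. -/
def riemannSum {d e : ℕ}
    (y : ℝ → (EuclideanSpace ℝ (Fin d) →L[ℝ] EuclideanSpace ℝ (Fin e)))
    (z : ℝ → EuclideanSpace ℝ (Fin d)) (π : List ℝ) : EuclideanSpace ℝ (Fin e) :=
  ((π.zip π.tail).map (fun q => y q.1 (z q.2 - z q.1))).sum

/-- The mesh of a dissection. -/
def mesh (π : List ℝ) : ℝ :=
  ((π.zip π.tail).map (fun q => q.2 - q.1)).foldr max 0

/-- `I` is the Young integral `∫_0^t y dz`, i.e. the limit of Riemann sums along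
dissections of `[0,t]` with mesh tending to `0`. -/
def IsYoungIntegral {d e : ℕ}
    (y : ℝ → (EuclideanSpace ℝ (Fin d) →L[ℝ] EuclideanSpace ℝ (Fin e)))
    (z : ℝ → EuclideanSpace ℝ (Fin d)) (t : ℝ)
    (I : EuclideanSpace ℝ (Fin e)) : Prop :=
  ∀ ε > (0 : ℝ), ∃ δ > (0 : ℝ), ∀ π : List ℝ,
    IsDissection 0 t π → mesh π < δ → ‖riemannSum y z π - I‖ < ε

/-! Young–Loève estimate: if a dissection has `n` interior points, Hölder's inequality and
pigeonhole give an interior point whose removal changes the Riemann sum of `g` against `z` by at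
most `‖g‖_{p₁-var} ‖z‖_{p₂-var} n ^ (-(1/p₁ + 1/p₂))`. Removing points one at a time, every Riemann
sum stays within `ζ(1/p₁ + 1/p₂) ‖g‖_{p₁-var} ‖z‖_{p₂-var}` of `g s (z t - z s)`.

Apply this to `g = yₙ - y` with an exponent `r' > r` for which still `1/r' + 1/q > 1`: each
increment of `g` is at most `2 ‖g‖_∞`, so `‖g‖_{r'-var}^{r'} ≤ (2 ‖g‖_∞)^{r' - r} ‖g‖_{r-var}^r`,
which tends to `0` since the `r`-variations stay bounded while `yₙ → y` uniformly. Both integrals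
are limits of Riemann sums, so the same bound holds for `∫₀ᵗ yₙ dz - ∫₀ᵗ y dz`, uniformly in `t`. -/

open Finset

def pairSum {M : Type*} [AddCommMonoid M] (f : ℝ → ℝ → M) (π : List ℝ) : M :=
  ((π.zip π.tail).map fun q => f q.1 q.2).sum

section pairSum

variable {M : Type*} [AddCommMonoid M] (f : ℝ → ℝ → M)

@[simp] lemma pairSum_nil : pairSum f [] = 0 := rfl

@[simp] lemma pairSum_singleton (a : ℝ) : pairSum f [a] = 0 := rfl

@[simp] lemma pairSum_cons_cons (a b : ℝ) (l : List ℝ) :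
    pairSum f (a :: b :: l) = f a b + pairSum f (b :: l) := by
  simp [pairSum]

lemma pairSum_eq_sum_range :
    ∀ l : List ℝ, pairSum f l = ∑ i ∈ range (l.length - 1), f (l.getD i 0) (l.getD (i + 1) 0)
  | [] => by simp
  | [a] => by simp
  | a :: b :: l => by
    rw [pairSum_cons_cons, pairSum_eq_sum_range (b :: l)]
    simp [sum_range_succ' _ (l.length), add_comm]

lemma pairSum_append_pair (l : List ℝ) (a b : ℝ) :
    pairSum f (l ++ [a, b]) = pairSum f (l ++ [a]) + f a b := by
  induction l with
  | nil => simp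
  | cons x l ih =>
    cases l with
    | nil => simp [add_comm]
    | cons y l => simp only [List.cons_append, pairSum_cons_cons] at ih ⊢; rw [ih, add_assoc]

lemma pairSum_add (g : ℝ → ℝ → M) (l : List ℝ) :
    pairSum (fun a b => f a b + g a b) l = pairSum f l + pairSum g l := by
  simp [pairSum_eq_sum_range, sum_add_distrib]

end pairSum

section pairSumGroup

variable {M : Type*} [AddCommGroup M] (f : ℝ → ℝ → M)

lemma pairSum_sub (g : ℝ → ℝ → M) (l : List ℝ) :
    pairSum (fun a b => f a b - g a b) l = pairSum f l - pairSum g l := by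
  simp [pairSum_eq_sum_range, sum_sub_distrib]

lemma pairSum_sub_pairSum_eraseIdx :
    ∀ (l : List ℝ) (i : ℕ), 1 ≤ i → i + 1 < l.length →
      pairSum f l - pairSum f (l.eraseIdx i) =
        f (l.getD (i - 1) 0) (l.getD i 0) + f (l.getD i 0) (l.getD (i + 1) 0)
          - f (l.getD (i - 1) 0) (l.getD (i + 1) 0)
  | a :: b :: c :: l, 1, _, _ => by
    show f a b + (f b c + pairSum f (c :: l)) - (f a c + pairSum f (c :: l)) = f a b + f b c - f a c
    abel
  | a :: b :: l, i + 2, _, hi => by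
    have := pairSum_sub_pairSum_eraseIdx (b :: l) (i + 1) (by omega) (by simp only [List.length_cons] at hi ⊢; omega)
    simpa using this
  | [], _, _, h | [_], _, _, h => by simp at h
  | _ :: _ :: _, 0, h, _ => by omega
  | [_, _], 1, _, h => by simp at h

end pairSumGroup

lemma pairSum_le_pairSum {f g : ℝ → ℝ → ℝ} {l : List ℝ} (h : ∀ a ∈ l, ∀ b ∈ l, f a b ≤ g a b) :
    pairSum f l ≤ pairSum g l :=
  List.sum_le_sum fun _ hq =>
    h _ (List.of_mem_zip hq).1 _ (List.mem_of_mem_tail (List.of_mem_zip hq).2)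

lemma mul_pairSum (c : ℝ) (f : ℝ → ℝ → ℝ) (l : List ℝ) :
    c * pairSum f l = pairSum (fun a b => c * f a b) l := by
  simp [pairSum_eq_sum_range, mul_sum]

namespace IsDissection

variable {s t : ℝ} {π : List ℝ}

lemma pairwise (h : IsDissection s t π) : π.Pairwise (· < ·) :=
  List.isChain_iff_pairwise.1 h.1

lemma exists_eq_cons (h : IsDissection s t π) : ∃ l, π = s :: l :=
  List.head?_eq_some_iff.1 h.2.1

lemma exists_eq_append (h : IsDissection s t π) : ∃ l, π = l ++ [t] :=
  List.getLast?_eq_some_iff.1 h.2.2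

lemma mem_Icc_s12 (h : IsDissection s t π) {x : ℝ} (hx : x ∈ π) : x ∈ Set.Icc s t := by
  constructor
  · obtain ⟨l, rfl⟩ := h.exists_eq_cons
    rcases List.mem_cons.1 hx with rfl | hx
    exacts [le_rfl, (List.rel_of_pairwise_cons h.pairwise hx).le]
  · obtain ⟨l, rfl⟩ := h.exists_eq_append
    have hp := List.pairwise_append.1 h.pairwise
    rcases List.mem_append.1 hx with hx | hx
    exacts [(hp.2.2 x hx t (List.mem_singleton_self t)).le, (List.mem_singleton.1 hx).le]

lemma le (h : IsDissection s t π) : s ≤ t := by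
  obtain ⟨l, rfl⟩ := h.exists_eq_cons
  exact (h.mem_Icc_s12 List.mem_cons_self).2

lemma pair (hst : s < t) : IsDissection s t [s, t] :=
  ⟨List.isChain_iff_pairwise.2 (by simpa using hst), rfl, rfl⟩

lemma singleton (s : ℝ) : IsDissection s s [s] :=
  ⟨List.isChain_iff_pairwise.2 (List.pairwise_singleton _ _), rfl, rfl⟩

lemma eq_pair (h : IsDissection s t π) (hl : π.length = 2) : π = [s, t] := by
  match π, h, hl with
  | [a, b], ⟨_, ha, hb⟩, _ => simp_all

lemma eq_singleton (h : IsDissection s t π) (hl : π.length = 1) : s = t ∧ π = [s] := by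
  match π, h, hl with
  | [a], ⟨_, ha, hb⟩, _ => simp_all

lemma eraseIdx (h : IsDissection s t π) {i : ℕ} (h₁ : 1 ≤ i) (h₂ : i + 1 < π.length) :
    IsDissection s t (π.eraseIdx i) := by
  refine ⟨List.isChain_iff_pairwise.2 (h.pairwise.sublist (List.eraseIdx_sublist π i)), ?_, ?_⟩
  · obtain ⟨l, rfl⟩ := h.exists_eq_cons
    obtain ⟨i, rfl⟩ := Nat.exists_eq_add_of_le' h₁
    simp
  · obtain ⟨l, rfl⟩ := h.exists_eq_append
    rw [List.eraseIdx_append_of_lt_length (by simpa using h₂)]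
    simp

lemma append_singleton (h : IsDissection s t π) {u : ℝ} (htu : t < u) :
    IsDissection s u (π ++ [u]) := by
  refine ⟨List.isChain_iff_pairwise.2 (List.pairwise_append.2 ⟨h.pairwise, by simp, ?_⟩), ?_, ?_⟩
  · simpa using fun x hx => (h.mem_Icc_s12 hx).2.trans_lt htu
  · obtain ⟨l, rfl⟩ := h.exists_eq_cons
    rfl
  · simp

lemma cons {u : ℝ} (h : IsDissection u t π) (hsu : s < u) : IsDissection s t (s :: π) := by
  obtain ⟨l, rfl⟩ := h.exists_eq_cons
  refine ⟨List.isChain_iff_pairwise.2 (List.pairwise_cons.2 ⟨?_, h.pairwise⟩), rfl, ?_⟩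
  · exact fun x hx => hsu.trans_le (h.mem_Icc_s12 hx).1
  · simpa using h.2.2

end IsDissection

@[simp] lemma mesh_singleton (a : ℝ) : mesh [a] = 0 := rfl

@[simp] lemma mesh_cons_cons (a b : ℝ) (l : List ℝ) :
    mesh (a :: b :: l) = max (b - a) (mesh (b :: l)) := rfl

lemma exists_isDissection_mesh_lt_of_le_mul {δ : ℝ} (hδ : 0 < δ) (N : ℕ) :
    ∀ {s t : ℝ}, s < t → t - s ≤ N * (δ / 2) → ∃ π, IsDissection s t π ∧ mesh π < δ := by
  induction N with
  | zero => intro s t hst h; rw [Nat.cast_zero, zero_mul] at h; linarith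
  | succ N ih =>
    intro s t hst h
    by_cases hδst : t - s < δ
    · exact ⟨[s, t], IsDissection.pair hst, by simpa [mesh] using ⟨hδst, hδ⟩⟩
    · obtain ⟨π, hπ, hmesh⟩ :=
        ih (s := s + δ / 2) (t := t) (by linarith) (by push_cast at h; linarith)
      obtain ⟨l, rfl⟩ := hπ.exists_eq_cons
      exact ⟨_, hπ.cons (by linarith), by simpa using ⟨by linarith, hmesh⟩⟩

lemma exists_isDissection_mesh_lt {s t δ : ℝ} (hst : s ≤ t) (hδ : 0 < δ) :
    ∃ π, IsDissection s t π ∧ mesh π < δ := by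
  rcases hst.eq_or_lt with rfl | hst
  · exact ⟨[s], IsDissection.singleton s, by simpa using hδ⟩
  · refine exists_isDissection_mesh_lt_of_le_mul hδ ⌈(t - s) / (δ / 2)⌉₊ hst ?_
    rw [← div_le_iff₀ (by positivity)]
    exact Nat.le_ceil _

section variation

variable {E : Type*} [NormedAddCommGroup E] {p : ℝ} {x : ℝ → E} {s t : ℝ} {π : List ℝ}

lemma varSum_eq_pairSum (p : ℝ) (x : ℝ → E) (π : List ℝ) :
    varSum p x π = pairSum (fun a b => ‖x b - x a‖ ^ p) π := rfl

lemma varSum_nonneg : 0 ≤ varSum p x π :=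
  List.sum_nonneg fun _ hq => by
    obtain ⟨q, -, rfl⟩ := List.mem_map.1 hq
    exact Real.rpow_nonneg (norm_nonneg _) p

@[simp] lemma varSum_pair (a b : ℝ) : varSum p x [a, b] = ‖x b - x a‖ ^ p := by
  simp [varSum_eq_pairSum]

lemma varSum_le_rpow_sub_mul_varSum {p' c : ℝ} (hp : 0 < p) (hpp' : p ≤ p')
    (hc : ∀ a ∈ π, ∀ b ∈ π, ‖x b - x a‖ ≤ c) :
    varSum p' x π ≤ c ^ (p' - p) * varSum p x π := by
  rw [varSum_eq_pairSum, varSum_eq_pairSum, mul_pairSum]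
  refine pairSum_le_pairSum fun a ha b hb => ?_
  rw [show p' = (p' - p) + p by ring, Real.rpow_add' (norm_nonneg _) (by linarith), sub_add_cancel]
  exact mul_le_mul_of_nonneg_right (Real.rpow_le_rpow (norm_nonneg _) (hc a ha b hb) (by linarith))
    (Real.rpow_nonneg (norm_nonneg _) p)

lemma varSum_sub_le {y : ℝ → E} (hp : 1 ≤ p) :
    varSum p (x - y) π ≤ 2 ^ (p - 1) * (varSum p x π + varSum p y π) := by
  rw [varSum_eq_pairSum, varSum_eq_pairSum, varSum_eq_pairSum, ← pairSum_add, mul_pairSum]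
  refine pairSum_le_pairSum fun a _ b _ => ?_
  have htri : ‖(x - y) b - (x - y) a‖ ≤ ‖x b - x a‖ + ‖y b - y a‖ := by
    rw [Pi.sub_apply, Pi.sub_apply, sub_sub_sub_comm]
    exact norm_sub_le _ _
  calc ‖(x - y) b - (x - y) a‖ ^ p ≤ (‖x b - x a‖ + ‖y b - y a‖) ^ p := by gcongr
    _ ≤ 2 ^ (p - 1) * (‖x b - x a‖ ^ p + ‖y b - y a‖ ^ p) := by
      exact_mod_cast NNReal.rpow_add_le_mul_rpow_add_rpow ‖x b - x a‖₊ ‖y b - y a‖₊ hp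

lemma IsDissection.exists_varSum_le {u : ℝ} (hπ : IsDissection s t π) (htu : t ≤ u) :
    ∃ σ, IsDissection s u σ ∧ varSum p x π ≤ varSum p x σ := by
  rcases htu.eq_or_lt with rfl | htu
  · exact ⟨π, hπ, le_rfl⟩
  · refine ⟨π ++ [u], hπ.append_singleton htu, ?_⟩
    obtain ⟨l, rfl⟩ := hπ.exists_eq_append
    rw [List.append_assoc, List.singleton_append, varSum_eq_pairSum, varSum_eq_pairSum,
      pairSum_append_pair]
    exact le_add_of_nonneg_right (Real.rpow_nonneg (norm_nonneg _) p)

lemma varSum_le_rpow_of_pVar_le {u B : ℝ} (hp : 0 < p) (hfin : HasFiniteVar p x s u)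
    (hπ : IsDissection s t π) (htu : t ≤ u) (hB : pVar p x s u ≤ B) :
    varSum p x π ≤ B ^ p := by
  obtain ⟨σ, hσ, hπσ⟩ := hπ.exists_varSum_le (p := p) (x := x) htu
  have hσB : varSum p x σ ^ (1 / p) ≤ B := (le_csSup hfin ⟨σ, hσ, rfl⟩).trans hB
  calc varSum p x π ≤ (varSum p x σ ^ (1 / p)) ^ p := by
        rwa [← Real.rpow_mul varSum_nonneg, one_div_mul_cancel hp.ne', Real.rpow_one]
    _ ≤ B ^ p := Real.rpow_le_rpow (Real.rpow_nonneg varSum_nonneg _) hσB hp.le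

lemma norm_sub_le_of_varSum_le {K : ℝ} (hp : 0 < p) (hπ : IsDissection s t π)
    (hK : ∀ σ, IsDissection s t σ → varSum p x σ ≤ K) :
    ‖x t - x s‖ ≤ K ^ (1 / p) := by
  rcases hπ.le.eq_or_lt with rfl | hst
  · simpa using Real.rpow_nonneg (varSum_nonneg.trans (hK π hπ)) _
  · calc ‖x t - x s‖ = (‖x t - x s‖ ^ p) ^ (1 / p) := by
          rw [← Real.rpow_mul (norm_nonneg _), mul_one_div_cancel hp.ne', Real.rpow_one]
      _ ≤ K ^ (1 / p) := by
          gcongr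
          simpa using hK _ (IsDissection.pair hst)

end variation

lemma sum_rpow_mul_le_of_sum_rpow_le {ι : Type*} {S : Finset ι} {p₁ p₂ K₁ K₂ : ℝ}
    (hp₁ : 0 < p₁) (hp₂ : 0 < p₂) {a b : ι → ℝ} (ha : ∀ i, 0 ≤ a i) (hb : ∀ i, 0 ≤ b i)
    (hA : ∑ i ∈ S, a i ^ p₁ ≤ K₁) (hB : ∑ i ∈ S, b i ^ p₂ ≤ K₂) :
    ∑ i ∈ S, (a i * b i) ^ (1 / p₁ + 1 / p₂)⁻¹ ≤
      (K₁ ^ (1 / p₁) * K₂ ^ (1 / p₂)) ^ (1 / p₁ + 1 / p₂)⁻¹ := by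
  set θ := (1 / p₁ + 1 / p₂)⁻¹
  have hθ : 0 ≤ θ := by positivity
  have hHolder : p₁.HolderTriple p₂ θ := by
    simpa [θ, one_div] using Real.HolderTriple.of_pos hp₁ hp₂
  have hA₀ : 0 ≤ ∑ i ∈ S, a i ^ p₁ := sum_nonneg fun i _ => Real.rpow_nonneg (ha i) _
  have hB₀ : 0 ≤ ∑ i ∈ S, b i ^ p₂ := sum_nonneg fun i _ => Real.rpow_nonneg (hb i) _
  have hK₁ : 0 ≤ K₁ := hA₀.trans hA
  have hK₂ : 0 ≤ K₂ := hB₀.trans hB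
  calc ∑ i ∈ S, (a i * b i) ^ θ
      ≤ (∑ i ∈ S, a i ^ p₁) ^ (θ / p₁) * (∑ i ∈ S, b i ^ p₂) ^ (θ / p₂) :=
        Real.Lr_rpow_le_Lp_mul_Lq_of_nonneg _ hHolder (fun i _ => ha i) (fun i _ => hb i)
    _ ≤ K₁ ^ (θ / p₁) * K₂ ^ (θ / p₂) :=
        mul_le_mul (Real.rpow_le_rpow hA₀ hA (div_nonneg hθ hp₁.le))
          (Real.rpow_le_rpow hB₀ hB (div_nonneg hθ hp₂.le)) (by positivity) (by positivity)
    _ = (K₁ ^ (1 / p₁) * K₂ ^ (1 / p₂)) ^ θ := by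
        rw [Real.mul_rpow (by positivity) (by positivity), ← Real.rpow_mul hK₁,
          ← Real.rpow_mul hK₂, one_div_mul_eq_div, one_div_mul_eq_div]

lemma exists_mul_le_of_sum_rpow_le {p₁ p₂ K₁ K₂ : ℝ} (hp₁ : 0 < p₁) (hp₂ : 0 < p₂)
    {n : ℕ} {a b : ℕ → ℝ} (ha : ∀ k, 0 ≤ a k) (hb : ∀ k, 0 ≤ b k)
    (hA : ∑ k ∈ range (n + 1), a k ^ p₁ ≤ K₁) (hB : ∑ k ∈ range (n + 1), b k ^ p₂ ≤ K₂) :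
    ∃ k < n + 1, a k * b k ≤
      K₁ ^ (1 / p₁) * K₂ ^ (1 / p₂) * ((n : ℝ) + 1) ^ (-(1 / p₁ + 1 / p₂)) := by
  set s := 1 / p₁ + 1 / p₂
  set D := K₁ ^ (1 / p₁) * K₂ ^ (1 / p₂)
  have hs : 0 < s := by positivity
  have hn : (0 : ℝ) < (n : ℝ) + 1 := by positivity
  have hab : ∀ j, 0 ≤ a j * b j := fun j => mul_nonneg (ha j) (hb j)
  obtain ⟨k, hk, hmin⟩ := exists_min_image (range (n + 1)) (fun k => a k * b k) ⟨0, by simp⟩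
  refine ⟨k, mem_range.1 hk, ?_⟩
  have hsum : ((n : ℝ) + 1) * (a k * b k) ^ s⁻¹ ≤ D ^ s⁻¹ := calc
    ((n : ℝ) + 1) * (a k * b k) ^ s⁻¹ ≤ ∑ j ∈ range (n + 1), (a j * b j) ^ s⁻¹ := by
      simpa using card_nsmul_le_sum _ _ _ fun j hj =>
        Real.rpow_le_rpow (hab k) (hmin j hj) (by positivity)
    _ ≤ D ^ s⁻¹ := sum_rpow_mul_le_of_sum_rpow_le hp₁ hp₂ ha hb hA hB
  have hD : 0 ≤ D := mul_nonneg
    (Real.rpow_nonneg ((sum_nonneg fun j _ => Real.rpow_nonneg (ha j) _).trans hA) _)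
    (Real.rpow_nonneg ((sum_nonneg fun j _ => Real.rpow_nonneg (hb j) _).trans hB) _)
  calc a k * b k = ((a k * b k) ^ s⁻¹) ^ s := by
        rw [← Real.rpow_mul (hab k), inv_mul_cancel₀ hs.ne', Real.rpow_one]
    _ ≤ (D ^ s⁻¹ / ((n : ℝ) + 1)) ^ s := by
        refine Real.rpow_le_rpow (Real.rpow_nonneg (hab k) _) ?_ hs.le
        rwa [le_div_iff₀ hn, mul_comm]
    _ = D * ((n : ℝ) + 1) ^ (-s) := by
        rw [Real.div_rpow (Real.rpow_nonneg hD _) hn.le, ← Real.rpow_mul hD,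
          inv_mul_cancel₀ hs.ne', Real.rpow_one, Real.rpow_neg hn.le, div_eq_mul_inv]

lemma summable_add_one_rpow_neg {p : ℝ} (hp : 1 < p) :
    Summable fun j : ℕ => ((j : ℝ) + 1) ^ (-p) := by
  simpa using (summable_nat_add_iff 1).2 (Real.summable_nat_rpow.2 (by linarith : -p < -1))

section riemann

variable {d e : ℕ} {s t : ℝ} {π : List ℝ}
  {g : ℝ → (EuclideanSpace ℝ (Fin d) →L[ℝ] EuclideanSpace ℝ (Fin e))}
  {z : ℝ → EuclideanSpace ℝ (Fin d)}

lemma riemannSum_eq_pairSum (π : List ℝ) :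
    riemannSum g z π = pairSum (fun a b => g a (z b - z a)) π := rfl

@[simp] lemma riemannSum_singleton (a : ℝ) : riemannSum g z [a] = 0 := rfl

@[simp] lemma riemannSum_pair (a b : ℝ) : riemannSum g z [a, b] = g a (z b - z a) := by
  simp [riemannSum_eq_pairSum]

lemma riemannSum_sub (y₁ y₂ : ℝ → (EuclideanSpace ℝ (Fin d) →L[ℝ] EuclideanSpace ℝ (Fin e)))
    (π : List ℝ) : riemannSum (y₁ - y₂) z π = riemannSum y₁ z π - riemannSum y₂ z π :=
  pairSum_sub (fun a b => y₁ a (z b - z a)) (fun a b => y₂ a (z b - z a)) π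

lemma riemannSum_sub_riemannSum_eraseIdx {i : ℕ} (h₁ : 1 ≤ i) (h₂ : i + 1 < π.length) :
    riemannSum g z π - riemannSum g z (π.eraseIdx i) =
      (g (π.getD i 0) - g (π.getD (i - 1) 0)) (z (π.getD (i + 1) 0) - z (π.getD i 0)) := by
  rw [riemannSum_eq_pairSum, riemannSum_eq_pairSum, pairSum_sub_pairSum_eraseIdx _ _ _ h₁ h₂]
  simp only [sub_apply, map_sub]
  abel

lemma IsYoungIntegral.sub
    {y₁ y₂ : ℝ → (EuclideanSpace ℝ (Fin d) →L[ℝ] EuclideanSpace ℝ (Fin e))}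
    {I₁ I₂ : EuclideanSpace ℝ (Fin e)}
    (h₁ : IsYoungIntegral y₁ z t I₁) (h₂ : IsYoungIntegral y₂ z t I₂) :
    IsYoungIntegral (y₁ - y₂) z t (I₁ - I₂) := by
  intro ε hε
  obtain ⟨δ₁, hδ₁, hI₁⟩ := h₁ (ε / 2) (by positivity)
  obtain ⟨δ₂, hδ₂, hI₂⟩ := h₂ (ε / 2) (by positivity)
  refine ⟨min δ₁ δ₂, lt_min hδ₁ hδ₂, fun π hπ hmesh => ?_⟩
  calc ‖riemannSum (y₁ - y₂) z π - (I₁ - I₂)‖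
      = ‖(riemannSum y₁ z π - I₁) - (riemannSum y₂ z π - I₂)‖ := by
        rw [riemannSum_sub, sub_sub_sub_comm]
    _ ≤ ‖riemannSum y₁ z π - I₁‖ + ‖riemannSum y₂ z π - I₂‖ := norm_sub_le _ _
    _ < ε / 2 + ε / 2 :=
        add_lt_add (hI₁ π hπ (hmesh.trans_le (min_le_left _ _)))
          (hI₂ π hπ (hmesh.trans_le (min_le_right _ _)))
    _ = ε := add_halves ε

lemma IsYoungIntegral.norm_le {I : EuclideanSpace ℝ (Fin e)} {c : ℝ}
    (h : IsYoungIntegral g z t I) (ht : 0 ≤ t)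
    (hc : ∀ π, IsDissection 0 t π → ‖riemannSum g z π‖ ≤ c) : ‖I‖ ≤ c := by
  refine le_of_forall_pos_lt_add fun ε hε => ?_
  obtain ⟨δ, hδ, hI⟩ := h ε hε
  obtain ⟨π, hπ, hmesh⟩ := exists_isDissection_mesh_lt ht hδ
  calc ‖I‖ ≤ ‖riemannSum g z π‖ + ‖riemannSum g z π - I‖ := by
        simpa using norm_sub_le (riemannSum g z π) (riemannSum g z π - I)
    _ < c + ε := add_lt_add_of_le_of_lt (hc π hπ) (hI π hπ hmesh)

variable {p₁ p₂ K₁ K₂ : ℝ}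

theorem norm_riemannSum_sub_le_sum_range (hp₁ : 0 < p₁) (hp₂ : 0 < p₂)
    (hg : ∀ σ, IsDissection s t σ → varSum p₁ g σ ≤ K₁)
    (hz : ∀ σ, IsDissection s t σ → varSum p₂ z σ ≤ K₂) (n : ℕ) :
    ∀ π, IsDissection s t π → π.length = n + 2 →
      ‖riemannSum g z π - g s (z t - z s)‖ ≤
        K₁ ^ (1 / p₁) * K₂ ^ (1 / p₂) * ∑ j ∈ range n, ((j : ℝ) + 1) ^ (-(1 / p₁ + 1 / p₂)) := by
  induction n with
  | zero =>
    intro π hπ hl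
    simp [hπ.eq_pair hl]
  | succ n ih =>
    intro π hπ hl
    set a : ℕ → ℝ := fun k => ‖g (π.getD (k + 1) 0) - g (π.getD k 0)‖
    set b : ℕ → ℝ := fun k => ‖z (π.getD (k + 2) 0) - z (π.getD (k + 1) 0)‖
    have hA : ∑ k ∈ range (n + 1), a k ^ p₁ ≤ K₁ := by
      refine le_trans ?_ (hg π hπ)
      rw [varSum_eq_pairSum, pairSum_eq_sum_range, hl, show n + 1 + 2 - 1 = n + 1 + 1 by omega,
        sum_range_succ _ (n + 1)]
      exact le_add_of_nonneg_right (by positivity)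
    have hB : ∑ k ∈ range (n + 1), b k ^ p₂ ≤ K₂ := by
      refine le_trans ?_ (hz π hπ)
      rw [varSum_eq_pairSum, pairSum_eq_sum_range, hl, show n + 1 + 2 - 1 = n + 1 + 1 by omega,
        sum_range_succ' _ (n + 1)]
      exact le_add_of_nonneg_right (by positivity)
    obtain ⟨k, hk, hab⟩ := exists_mul_le_of_sum_rpow_le hp₁ hp₂
      (fun _ => norm_nonneg _) (fun _ => norm_nonneg _) hA hB
    have hπ' := hπ.eraseIdx (i := k + 1) (by omega) (by omega)
    have hl' : (π.eraseIdx (k + 1)).length = n + 2 := by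
      rw [List.length_eraseIdx_of_lt (by omega)]; omega
    have herase : ‖riemannSum g z π - riemannSum g z (π.eraseIdx (k + 1))‖ ≤ a k * b k := by
      rw [riemannSum_sub_riemannSum_eraseIdx (by omega) (by omega)]
      exact ContinuousLinearMap.le_opNorm _ _
    calc ‖riemannSum g z π - g s (z t - z s)‖
        ≤ ‖riemannSum g z π - riemannSum g z (π.eraseIdx (k + 1))‖
          + ‖riemannSum g z (π.eraseIdx (k + 1)) - g s (z t - z s)‖ :=
          norm_sub_le_norm_sub_add_norm_sub _ _ _
      _ ≤ K₁ ^ (1 / p₁) * K₂ ^ (1 / p₂) * ((n : ℝ) + 1) ^ (-(1 / p₁ + 1 / p₂))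
          + K₁ ^ (1 / p₁) * K₂ ^ (1 / p₂) * ∑ j ∈ range n, ((j : ℝ) + 1) ^ (-(1 / p₁ + 1 / p₂)) :=
          add_le_add (herase.trans hab) (ih _ hπ' hl')
      _ = K₁ ^ (1 / p₁) * K₂ ^ (1 / p₂)
          * ∑ j ∈ range (n + 1), ((j : ℝ) + 1) ^ (-(1 / p₁ + 1 / p₂)) := by
          rw [sum_range_succ]; ring

theorem norm_riemannSum_sub_le (hp₁ : 0 < p₁) (hp₂ : 0 < p₂) (hp : 1 < 1 / p₁ + 1 / p₂)
    (hg : ∀ σ, IsDissection s t σ → varSum p₁ g σ ≤ K₁)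
    (hz : ∀ σ, IsDissection s t σ → varSum p₂ z σ ≤ K₂) (hπ : IsDissection s t π) :
    ‖riemannSum g z π - g s (z t - z s)‖ ≤
      K₁ ^ (1 / p₁) * K₂ ^ (1 / p₂) * ∑' j : ℕ, ((j : ℝ) + 1) ^ (-(1 / p₁ + 1 / p₂)) := by
  have hK₁ : 0 ≤ K₁ := varSum_nonneg.trans (hg π hπ)
  have hK₂ : 0 ≤ K₂ := varSum_nonneg.trans (hz π hπ)
  obtain ⟨l, rfl⟩ := hπ.exists_eq_cons
  rcases l with _ | ⟨b, l⟩
  · obtain ⟨rfl, -⟩ := hπ.eq_singleton rfl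
    simpa using by positivity
  · refine (norm_riemannSum_sub_le_sum_range hp₁ hp₂ hg hz l.length _ hπ (by simp)).trans ?_
    gcongr
    exact (summable_add_one_rpow_neg hp).sum_le_tsum _ fun j _ => by positivity

theorem norm_riemannSum_le_of_norm_le {r r' q ε M K : ℝ} (hr : 0 < r) (hrr' : r ≤ r') (hq : 0 < q)
    (hr'q : 1 < 1 / r' + 1 / q) (hgε : ∀ x ∈ Set.Icc s t, ‖g x‖ ≤ ε)
    (hg : ∀ σ, IsDissection s t σ → varSum r g σ ≤ M)
    (hz : ∀ σ, IsDissection s t σ → varSum q z σ ≤ K) (hπ : IsDissection s t π) :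
    ‖riemannSum g z π‖ ≤
      (ε + ((2 * ε) ^ (r' - r) * M) ^ (1 / r') * ∑' j : ℕ, ((j : ℝ) + 1) ^ (-(1 / r' + 1 / q)))
        * K ^ (1 / q) := by
  have hs : ‖g s‖ ≤ ε := hgε s ⟨le_rfl, hπ.le⟩
  have hε : 0 ≤ ε := (norm_nonneg _).trans hs
  have hg' : ∀ σ, IsDissection s t σ → varSum r' g σ ≤ (2 * ε) ^ (r' - r) * M := by
    intro σ hσ
    refine (varSum_le_rpow_sub_mul_varSum hr hrr' fun a ha b hb => ?_).trans
      (mul_le_mul_of_nonneg_left (hg σ hσ) (by positivity))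
    calc ‖g b - g a‖ ≤ ‖g b‖ + ‖g a‖ := norm_sub_le _ _
      _ ≤ ε + ε := add_le_add (hgε b (hσ.mem_Icc_s12 hb)) (hgε a (hσ.mem_Icc_s12 ha))
      _ = 2 * ε := (two_mul ε).symm
  have hbase : ‖g s (z t - z s)‖ ≤ ε * K ^ (1 / q) :=
    (ContinuousLinearMap.le_opNorm _ _).trans
      (mul_le_mul hs (norm_sub_le_of_varSum_le hq hπ hz) (norm_nonneg _) hε)
  calc ‖riemannSum g z π‖ ≤ ‖riemannSum g z π - g s (z t - z s)‖ + ‖g s (z t - z s)‖ :=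
        norm_le_norm_sub_add _ _
    _ ≤ ((2 * ε) ^ (r' - r) * M) ^ (1 / r') * K ^ (1 / q)
          * ∑' j : ℕ, ((j : ℝ) + 1) ^ (-(1 / r' + 1 / q)) + ε * K ^ (1 / q) :=
        add_le_add (norm_riemannSum_sub_le (hr.trans_le hrr') hq hr'q hg' hz hπ) hbase
    _ = _ := by ring

end riemann

open Topology

lemma tendsto_nhds_zero_of_forall_eventually_le {ι : Type*} {l : Filter ι} {f : ι → ℝ}
    {Φ : ℝ → ℝ} (hf : ∀ i, 0 ≤ f i) (hΦ : Tendsto Φ (𝓝[>] 0) (𝓝 0))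
    (h : ∀ ε > 0, ∀ᶠ i in l, f i ≤ Φ ε) : Tendsto f l (𝓝 0) := by
  refine tendsto_order.2 ⟨fun a ha => Eventually.of_forall fun i => ha.trans_le (hf i),
    fun a ha => ?_⟩
  obtain ⟨ε, hΦε, hε⟩ := ((hΦ.eventually (gt_mem_nhds ha)).and self_mem_nhdsWithin).exists
  exact (h ε hε).mono fun i hi => hi.trans_lt hΦε

lemma tendsto_interpolation_bound {α β M C K : ℝ} (hα : 0 < α) (hβ : 0 < β) :
    Tendsto (fun ε : ℝ => (ε + ((2 * ε) ^ α * M) ^ β * C) * K) (𝓝[>] 0) (𝓝 0) := by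
  have h₁ := Real.continuous_rpow_const hα.le
  have h₂ := Real.continuous_rpow_const hβ.le
  have hcont : Continuous fun ε : ℝ => (ε + ((2 * ε) ^ α * M) ^ β * C) * K := by fun_prop
  have h₀ : (0 + ((2 * 0) ^ α * M) ^ β * C) * K = 0 := by
    simp [Real.zero_rpow hα.ne', Real.zero_rpow hβ.ne']
  simpa only [h₀] using (hcont.tendsto 0).mono_left (nhdsWithin_le_nhds (s := Set.Ioi 0))

lemma exists_gt_one_lt_one_div_add {q r : ℝ} (hr : 0 < r) (hrq : 1 < 1 / r + 1 / q) :
    ∃ r', r < r' ∧ 1 < 1 / r' + 1 / q := by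
  have hcont : ContinuousAt (fun x : ℝ => 1 / x + 1 / q) r := by fun_prop (disch := positivity)
  obtain ⟨r', hr', hrr'⟩ := (((hcont.eventually (lt_mem_nhds hrq)).filter_mono
    nhdsWithin_le_nhds).and (self_mem_nhdsWithin (s := Set.Ioi r))).exists
  exact ⟨r', hrr', hr'⟩

theorem young_integral_uniform_convergence_general
    (d e : ℕ) (T q r : ℝ) (hT : 0 < T) (hq : 1 ≤ q) (hr : 1 ≤ r)
    (hqr : 1 < 1 / q + 1 / r)
    (z : ℝ → EuclideanSpace ℝ (Fin d))
    (hzfin : HasFiniteVar q z 0 T)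
    (y : ℝ → (EuclideanSpace ℝ (Fin d) →L[ℝ] EuclideanSpace ℝ (Fin e)))
    (hyfin : HasFiniteVar r y 0 T)
    (yn : ℕ → ℝ → (EuclideanSpace ℝ (Fin d) →L[ℝ] EuclideanSpace ℝ (Fin e)))
    (hynfin : ∀ n, HasFiniteVar r (yn n) 0 T)
    (hunif : TendstoUniformlyOn yn y atTop (Set.Icc 0 T))
    (hbdd : BddAbove (Set.range fun n => pVar r (yn n) 0 T))
    (In : ℕ → ℝ → EuclideanSpace ℝ (Fin e))
    (I : ℝ → EuclideanSpace ℝ (Fin e))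
    (hIn : ∀ n, ∀ t ∈ Set.Icc (0 : ℝ) T, IsYoungIntegral (yn n) z t (In n t))
    (hI : ∀ t ∈ Set.Icc (0 : ℝ) T, IsYoungIntegral y z t (I t)) :
    Tendsto (fun n => ⨆ t : Set.Icc (0 : ℝ) T, ‖In n t - I t‖) atTop (nhds 0) := by
  have hq₀ : 0 < q := by linarith
  have hr₀ : 0 < r := by linarith
  obtain ⟨r', hrr', hr'q⟩ := exists_gt_one_lt_one_div_add hr₀ (by linarith : 1 < 1 / r + 1 / q)
  obtain ⟨B, hB⟩ := hbdd
  set M := 2 ^ (r - 1) * (B ^ r + pVar r y 0 T ^ r)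
  set K := pVar q z 0 T ^ q
  have hM : ∀ n, ∀ t ∈ Set.Icc 0 T, ∀ σ, IsDissection 0 t σ → varSum r (yn n - y) σ ≤ M :=
    fun n t ht σ hσ => (varSum_sub_le hr).trans <| mul_le_mul_of_nonneg_left
      (add_le_add (varSum_le_rpow_of_pVar_le hr₀ (hynfin n) hσ ht.2 (hB ⟨n, rfl⟩))
        (varSum_le_rpow_of_pVar_le hr₀ hyfin hσ ht.2 le_rfl)) (by positivity)
  have hK : ∀ t ∈ Set.Icc 0 T, ∀ σ, IsDissection 0 t σ → varSum q z σ ≤ K :=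
    fun t ht σ hσ => varSum_le_rpow_of_pVar_le hq₀ hzfin hσ ht.2 le_rfl
  refine tendsto_nhds_zero_of_forall_eventually_le
    (fun n => Real.iSup_nonneg fun t => norm_nonneg _)
    (tendsto_interpolation_bound (M := M) (C := ∑' j : ℕ, ((j : ℝ) + 1) ^ (-(1 / r' + 1 / q)))
      (K := K ^ (1 / q)) (sub_pos.2 hrr') (one_div_pos.2 (hr₀.trans hrr'))) fun ε hε => ?_
  have : Nonempty (Set.Icc 0 T) := ⟨⟨0, le_rfl, hT.le⟩⟩
  filter_upwards [Metric.tendstoUniformlyOn_iff.1 hunif ε hε] with n hn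
  refine ciSup_le fun t => ((hIn n t t.2).sub (hI t t.2)).norm_le t.2.1 fun π hπ =>
    norm_riemannSum_le_of_norm_le hr₀ hrr'.le hq₀ hr'q (fun x hx => ?_) (hM n t t.2) (hK t t.2) hπ
  simpa [dist_eq_norm'] using (hn x ⟨hx.1, hx.2.trans t.2.2⟩).le

theorem young_integral_uniform_convergence
    (d e : ℕ) (T q r : ℝ) (hT : 0 < T) (hq : 1 ≤ q) (hr : 1 ≤ r)
    (hqr : 1 < 1 / q + 1 / r)
    (z : ℝ → EuclideanSpace ℝ (Fin d))
    (hz : ContinuousOn z (Set.Icc 0 T)) (hzfin : HasFiniteVar q z 0 T)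
    (y : ℝ → (EuclideanSpace ℝ (Fin d) →L[ℝ] EuclideanSpace ℝ (Fin e)))
    (hy : ContinuousOn y (Set.Icc 0 T)) (hyfin : HasFiniteVar r y 0 T)
    (yn : ℕ → ℝ → (EuclideanSpace ℝ (Fin d) →L[ℝ] EuclideanSpace ℝ (Fin e)))
    (hyn : ∀ n, ContinuousOn (yn n) (Set.Icc 0 T))
    (hynfin : ∀ n, HasFiniteVar r (yn n) 0 T)
    (hunif : TendstoUniformlyOn yn y atTop (Set.Icc 0 T))
    (hbdd : BddAbove (Set.range fun n => pVar r (yn n) 0 T))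
    (In : ℕ → ℝ → EuclideanSpace ℝ (Fin e))
    (I : ℝ → EuclideanSpace ℝ (Fin e))
    (hIn : ∀ n, ∀ t ∈ Set.Icc (0 : ℝ) T, IsYoungIntegral (yn n) z t (In n t))
    (hI : ∀ t ∈ Set.Icc (0 : ℝ) T, IsYoungIntegral y z t (I t)) :
    Tendsto (fun n => ⨆ t : Set.Icc (0 : ℝ) T, ‖In n t - I t‖) atTop (nhds 0) :=
  young_integral_uniform_convergence_general d e T q r hT hq hr hqr z hzfin y hyfin yn hynfin hunif
    hbdd In I hIn hI
end
end

section
/- Let C : [0,T] ⇉ ℝ^e be compact convex valued. Fix n ∈ ℕ*, a ∈ C(0), an ℝ^e-valued function H^n on [0,T], and define Y^n(t_k^n) recursively by Y^n(t_0^n) = a - H^n applied appropriately and Y^n(t_{k}^n) = p_{C(t_k^n) - H^n(t_k^n)}(Y^n(t_{k-1}^n)). Then for every 0 ≤ s < t ≤ T and every z ∈ ⋂_{τ∈[s,t]} (C(τ) - H^n(τ)), ⟨z, Y^n(t) - Y^n(s)⟩ ≥ (‖Y^n(t)‖² - ‖Y^n(s)‖²)/2, where Y^n is the piecewise-constant interpolation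 Y^n(t) := Y^n(t_k^n) for t ∈ [t_k^n, t_{k+1}^n). -/
noncomputable section

open Classical in
/-- The metric projection onto a set `C` (via choice; `x` itself if no closest
point exists). -/
def metricProj {e : ℕ} (C : Set (EuclideanSpace ℝ (Fin e)))
    (x : EuclideanSpace ℝ (Fin e)) : EuclideanSpace ℝ (Fin e) :=
  if h : ∃ y ∈ C, ∀ z ∈ C, dist x y ≤ dist x z then h.choose else x

/-!
Each step of the scheme is a projection onto a closed convex set containing `z`, and the
variational inequality of the projection `p` of `x` says exactly that the quantity
`⟪z, ·⟫ - ‖·‖² / 2` does not decrease from `x` to `p`. Along the steps between `s` and `t`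
all these sets contain `z`, so the quantity telescopes to the claimed inequality.
-/

open RealInnerProductSpace

theorem inner_sub_half_sq_norm_le_of_inner_le_zero {F : Type*} [NormedAddCommGroup F]
    [InnerProductSpace ℝ F] {x p z : F} (h : ⟪x - p, z - p⟫ ≤ 0) :
    ⟪z, x⟫ - ‖x‖ ^ 2 / 2 ≤ ⟪z, p⟫ - ‖p‖ ^ 2 / 2 := by
  have key : ⟪z, p⟫ - ‖p‖ ^ 2 / 2 - (⟪z, x⟫ - ‖x‖ ^ 2 / 2)
      = -⟪x - p, z - p⟫ + ‖x - p‖ ^ 2 / 2 := by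
    simp only [norm_sub_sq_real, inner_sub_left, inner_sub_right, real_inner_self_eq_norm_sq,
      real_inner_comm x z, real_inner_comm p z]
    ring
  linarith [sq_nonneg ‖x - p‖]

namespace metricProj

variable {e : ℕ} {S : Set (EuclideanSpace ℝ (Fin e))}

theorem mem_and_inner_le_zero (hS : IsClosed S) (hconv : Convex ℝ S) (hne : S.Nonempty)
    (x : EuclideanSpace ℝ (Fin e)) :
    metricProj S x ∈ S ∧ ∀ y ∈ S, ⟪x - metricProj S x, y - metricProj S x⟫ ≤ 0 := by
  have hex : ∃ y ∈ S, ∀ w ∈ S, dist x y ≤ dist x w := by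
    obtain ⟨y, hy, hyd⟩ := hS.exists_infDist_eq_dist hne x
    exact ⟨y, hy, fun w hw => hyd ▸ Metric.infDist_le_dist_of_mem hw⟩
  rw [metricProj, dif_pos hex]
  obtain ⟨hmem, hmin⟩ := hex.choose_spec
  refine ⟨hmem, (norm_eq_iInf_iff_real_inner_le_zero hconv hmem).mp (le_antisymm ?_ ?_)⟩
  · have : Nonempty S := ⟨⟨_, hmem⟩⟩
    exact le_ciInf fun w => by simpa only [dist_eq_norm] using hmin w w.2
  · exact ciInf_le ⟨0, by rintro r ⟨w, rfl⟩; exact norm_nonneg _⟩ (⟨_, hmem⟩ : S)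

theorem inner_sub_half_sq_norm_le (hS : IsClosed S) (hconv : Convex ℝ S)
    {z : EuclideanSpace ℝ (Fin e)} (hz : z ∈ S)
    (x : EuclideanSpace ℝ (Fin e)) :
    ⟪z, x⟫ - ‖x‖ ^ 2 / 2 ≤ ⟪z, metricProj S x⟫ - ‖metricProj S x‖ ^ 2 / 2 :=
  inner_sub_half_sq_norm_le_of_inner_le_zero
    ((mem_and_inner_le_zero hS hconv ⟨z, hz⟩ x).2 z hz)

end metricProj

theorem mem_Ico_floor_div_mul {t h : ℝ} (ht : 0 ≤ t) (hh : 0 < h) :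
    t ∈ Set.Ico (⌊t / h⌋₊ * h) ((⌊t / h⌋₊ + 1) * h) :=
  ⟨(le_div_iff₀ hh).1 (Nat.floor_le (div_nonneg ht hh.le)),
    (div_lt_iff₀ hh).1 (Nat.lt_floor_add_one _)⟩

theorem eq_at_floor_of_step {X : Type*} {T : ℝ} (hT : 0 < T) {n : ℕ} (hn : 0 < n)
    {Yd : ℕ → X} {Y : ℝ → X}
    (hYstep : ∀ k : ℕ, k < n → ∀ t ∈ Set.Ico ((k : ℝ) * T / n) (((k : ℝ) + 1) * T / n),
      Y t = Yd k)
    (hYT : Y T = Yd n) {t : ℝ} (ht : t ∈ Set.Icc 0 T) :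
    Y t = Yd ⌊t / (T / n)⌋₊ := by
  have hh : 0 < T / n := by positivity
  rcases ht.2.eq_or_lt with rfl | htT
  · rwa [div_div_cancel₀ hT.ne', Nat.floor_natCast]
  · refine hYstep _ ?_ t ?_
    · exact (Nat.floor_lt (div_nonneg ht.1 hh.le)).2 ((div_lt_iff₀ hh).2 (by field_simp; exact htT))
    · simpa only [mul_div_assoc] using mem_Ico_floor_div_mul ht.1 hh

theorem discrete_scheme_variational_inequality_general
    (e : ℕ) (T : ℝ) (hT : 0 < T) (n : ℕ) (hn : 0 < n)
    (C : ℝ → Set (EuclideanSpace ℝ (Fin e)))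
    (hC : ∀ t ∈ Set.Icc (0 : ℝ) T,
      (C t).Nonempty ∧ IsCompact (C t) ∧ Convex ℝ (C t))
    (Hn : ℝ → EuclideanSpace ℝ (Fin e))
    (Yd : ℕ → EuclideanSpace ℝ (Fin e))
    (hYrec : ∀ k : ℕ, 1 ≤ k → k ≤ n →
      Yd k = metricProj ((fun c => c - Hn (k * T / n)) '' C (k * T / n)) (Yd (k - 1)))
    (Y : ℝ → EuclideanSpace ℝ (Fin e))
    (hYstep : ∀ k : ℕ, k < n → ∀ t ∈ Set.Ico ((k : ℝ) * T / n) (((k : ℝ) + 1) * T / n),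
      Y t = Yd k)
    (hYT : Y T = Yd n) :
    ∀ s t : ℝ, 0 ≤ s → s < t → t ≤ T →
      ∀ z : EuclideanSpace ℝ (Fin e),
        (∀ τ ∈ Set.Icc s t, z ∈ (fun c => c - Hn τ) '' C τ) →
          (‖Y t‖ ^ 2 - ‖Y s‖ ^ 2) / 2 ≤ (inner ℝ z (Y t - Y s) : ℝ) := by
  intro s t hs hst htT z hz
  have hh : 0 < T / n := by positivity
  set ks := ⌊s / (T / n)⌋₊
  set kt := ⌊t / (T / n)⌋₊
  have hYs : Y s = Yd ks := eq_at_floor_of_step hT hn hYstep hYT ⟨hs, hst.le.trans htT⟩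
  have hYt : Y t = Yd kt := eq_at_floor_of_step hT hn hYstep hYT ⟨hs.trans hst.le, htT⟩
  have hs_lt : s < (ks + 1) * (T / n) := (mem_Ico_floor_div_mul hs hh).2
  have ht_ge : kt * (T / n) ≤ t := (mem_Ico_floor_div_mul (hs.trans hst.le) hh).1
  have hkt : kt ≤ n := Nat.floor_le_of_le ((div_le_iff₀ hh).2 (by field_simp; exact htT))
  have hkskt : ks ≤ kt := Nat.floor_mono (by gcongr)
  let Φ : ℕ → ℝ := fun k => ⟪z, Yd k⟫ - ‖Yd k‖ ^ 2 / 2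
  have step : ∀ j ∈ Set.Icc ks kt, j + 1 ∈ Set.Icc ks kt → Φ j ≤ Φ (j + 1) := by
    rintro j ⟨hksj, -⟩ ⟨-, hjkt⟩
    set τ : ℝ := ((j + 1 : ℕ) : ℝ) * T / n
    have hτ : τ = ((j + 1 : ℕ) : ℝ) * (T / n) := mul_div_assoc _ _ _
    have hsτ : s < τ := hs_lt.trans_le <| by
      rw [hτ]; gcongr; exact_mod_cast Nat.succ_le_succ hksj
    have hτt : τ ≤ t := le_trans (by rw [hτ]; gcongr) ht_ge
    obtain ⟨-, hcomp, hconv⟩ := hC τ ⟨hs.trans hsτ.le, hτt.trans htT⟩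
    simp only [Φ]
    rw [hYrec (j + 1) j.succ_pos (by omega), Nat.add_sub_cancel]
    refine metricProj.inner_sub_half_sq_norm_le (hcomp.image (continuous_sub_right _)).isClosed
      ?_ (hz τ ⟨hsτ.le, hτt⟩) _
    simpa only [sub_eq_neg_add] using hconv.translate (-Hn τ)
  have hΦ : Φ ks ≤ Φ kt :=
    monotoneOn_of_le_succ Set.ordConnected_Icc (fun j _ => step j) ⟨le_rfl, hkskt⟩
      ⟨hkskt, le_rfl⟩ hkskt
  simp only [Φ] at hΦ
  rw [hYs, hYt, inner_sub_right]
  linarith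

theorem discrete_scheme_variational_inequality
    (e : ℕ) (T : ℝ) (hT : 0 < T) (n : ℕ) (hn : 0 < n)
    (C : ℝ → Set (EuclideanSpace ℝ (Fin e)))
    (hC : ∀ t ∈ Set.Icc (0 : ℝ) T,
      (C t).Nonempty ∧ IsCompact (C t) ∧ Convex ℝ (C t))
    (a : EuclideanSpace ℝ (Fin e)) (ha : a ∈ C 0)
    (Hn : ℝ → EuclideanSpace ℝ (Fin e))
    (Yd : ℕ → EuclideanSpace ℝ (Fin e))
    (hY0 : Yd 0 = a - Hn 0)
    (hYrec : ∀ k : ℕ, 1 ≤ k → k ≤ n →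
      Yd k = metricProj ((fun c => c - Hn (k * T / n)) '' C (k * T / n)) (Yd (k - 1)))
    (Y : ℝ → EuclideanSpace ℝ (Fin e))
    (hYstep : ∀ k : ℕ, k < n → ∀ t ∈ Set.Ico ((k : ℝ) * T / n) (((k : ℝ) + 1) * T / n),
      Y t = Yd k)
    (hYT : Y T = Yd n) :
    ∀ s t : ℝ, 0 ≤ s → s < t → t ≤ T →
      ∀ z : EuclideanSpace ℝ (Fin e),
        (∀ τ ∈ Set.Icc s t, z ∈ (fun c => c - Hn τ) '' C τ) →
          (‖Y t‖ ^ 2 - ‖Y s‖ ^ 2) / 2 ≤ (inner ℝ z (Y t - Y s) : ℝ) :=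
  discrete_scheme_variational_inequality_general e T hT n hn C hC Hn Yd hYrec Y hYstep hYT
end
end
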